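/- For real x with 0 < |x| < 1, ∫₀^π θ sin θ / (1 + x⁴ cos⁴ θ) dθ = (π/(2^{5/2} x)) · log((1 + √2 x + x²)/(1 − √2 x + x²)) + (π/(2^{3/2} x)) · arctan(√2 x / (1 − x²)). -/

import Mathlib

/-!
Reflecting `θ ↦ π - θ` replaces the weight `θ` by `π / 2`, and `u = cos θ` then reduces
the integral to `(π / 2) ∫_{-1}^{1} du / (1 + x⁴u⁴) = (π / x) F(x)`, where `F` is the
classical odd primitive of `1 / (1 + t⁴)` coming from the factorisation
`1 + t⁴ = (1 + √2 t + t²)(1 - √2 t + t²)`. For `x² < 1` the two arctangents in `F(x)`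
combine into the single one of the closed form.
-/

open Real intervalIntegral

theorem integral_id_mul_eq_half_mul_integral {g : ℝ → ℝ} {a : ℝ}
    (hg : IntervalIntegrable g MeasureTheory.volume 0 a) (hsymm : ∀ θ, g (a - θ) = g θ) :
    ∫ θ in 0..a, θ * g θ = a / 2 * ∫ θ in 0..a, g θ := by
  have hreflect : ∫ θ in 0..a, θ * g θ = ∫ θ in 0..a, (a - θ) * g θ := by
    simpa [hsymm] using (integral_comp_sub_left (fun θ => θ * g θ) a (a := 0) (b := a)).symm
  have hsum :
      (∫ θ in 0..a, θ * g θ) + ∫ θ in 0..a, (a - θ) * g θ = a * ∫ θ in 0..a, g θ := by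
    rw [← integral_add (hg.continuousOn_mul (g := fun θ => θ) continuousOn_id)
        (hg.continuousOn_mul (g := fun θ => a - θ) (continuousOn_const.sub continuousOn_id)),
      ← integral_const_mul]
    congr 1 with θ
    ring
  linarith

theorem integral_sin_mul_comp_cos {f : ℝ → ℝ} (hf : Continuous f) :
    ∫ θ in 0..π, sin θ * f (cos θ) = ∫ u in -1..1, f u := by
  have h := integral_comp_mul_deriv (a := 0) (b := π) (fun θ _ => hasDerivAt_cos θ)
    continuous_sin.neg.continuousOn hf
  simp only [cos_zero, cos_pi, Function.comp_def, mul_neg, intervalIntegral.integral_neg] at h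
  rw [integral_symm (-1), neg_inj] at h
  simpa [mul_comm] using h

noncomputable def primitiveInvOneAddPowFour (t : ℝ) : ℝ :=
  √2 / 8 * (log (1 + √2 * t + t ^ 2) - log (1 - √2 * t + t ^ 2))
    + √2 / 4 * (arctan (√2 * t + 1) + arctan (√2 * t - 1))

theorem one_add_sqrt_two_mul_add_sq_pos (t : ℝ) : 0 < 1 + √2 * t + t ^ 2 := by
  nlinarith [sq_sqrt (zero_le_two (α := ℝ)), sq_nonneg (t + √2 / 2)]

theorem one_sub_sqrt_two_mul_add_sq_pos (t : ℝ) : 0 < 1 - √2 * t + t ^ 2 := by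
  nlinarith [sq_sqrt (zero_le_two (α := ℝ)), sq_nonneg (t - √2 / 2)]

theorem hasDerivAt_primitiveInvOneAddPowFour (t : ℝ) :
    HasDerivAt primitiveInvOneAddPowFour (1 + t ^ 4)⁻¹ t := by
  have hp := one_add_sqrt_two_mul_add_sq_pos t
  have hq := one_sub_sqrt_two_mul_add_sq_pos t
  have hlin := (hasDerivAt_id' t).const_mul √2
  have h : HasDerivAt primitiveInvOneAddPowFour _ t :=
    ((((((hasDerivAt_const t 1).add hlin).add (hasDerivAt_pow 2 t)).log hp.ne').sub
        ((((hasDerivAt_const t 1).sub hlin).add (hasDerivAt_pow 2 t)).log hq.ne')).const_mul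
      (√2 / 8)).add
    (((hlin.add_const 1).arctan.add (hlin.sub_const 1).arctan).const_mul (√2 / 4))
  refine h.congr_deriv ?_
  have hs : √2 ^ 2 = 2 := sq_sqrt zero_le_two
  have hfac : 1 + t ^ 4 = (1 + √2 * t + t ^ 2) * (1 - √2 * t + t ^ 2) := by
    linear_combination t ^ 2 * hs
  have hp' : 1 + (√2 * t + 1) ^ 2 = 2 * (1 + √2 * t + t ^ 2) := by linear_combination t ^ 2 * hs
  have hq' : 1 + (√2 * t - 1) ^ 2 = 2 * (1 - √2 * t + t ^ 2) := by linear_combination t ^ 2 * hs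
  simp only [Pi.add_apply, Pi.sub_apply, Nat.cast_ofNat, Nat.add_one_sub_one, pow_one, mul_one]
  rw [hfac, hp', hq']
  set p := 1 + √2 * t + t ^ 2 with hp_def
  set q := 1 - √2 * t + t ^ 2 with hq_def
  field_simp
  rw [hp_def, hq_def]
  linear_combination 32 * hs

theorem primitiveInvOneAddPowFour_neg (t : ℝ) :
    primitiveInvOneAddPowFour (-t) = -primitiveInvOneAddPowFour t := by
  have h₁ : 1 + √2 * -t + (-t) ^ 2 = 1 - √2 * t + t ^ 2 := by ring
  have h₂ : 1 - √2 * -t + (-t) ^ 2 = 1 + √2 * t + t ^ 2 := by ring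
  have h₃ : √2 * -t + 1 = -(√2 * t - 1) := by ring
  have h₄ : √2 * -t - 1 = -(√2 * t + 1) := by ring
  rw [primitiveInvOneAddPowFour, primitiveInvOneAddPowFour, h₁, h₂, h₃, h₄, arctan_neg,
    arctan_neg]
  ring

theorem integral_inv_one_add_pow_four (a b : ℝ) :
    ∫ t in a..b, (1 + t ^ 4)⁻¹ = primitiveInvOneAddPowFour b - primitiveInvOneAddPowFour a :=
  integral_eq_sub_of_hasDerivAt (fun t _ => hasDerivAt_primitiveInvOneAddPowFour t)
    (Continuous.intervalIntegrable (by fun_prop (disch := intro t; positivity)) a b)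

theorem primitiveInvOneAddPowFour_eq {x : ℝ} (hx : x ^ 2 < 1) :
    primitiveInvOneAddPowFour x = √2 / 8 * log ((1 + √2 * x + x ^ 2) / (1 - √2 * x + x ^ 2))
      + √2 / 4 * arctan (√2 * x / (1 - x ^ 2)) := by
  have hs : √2 ^ 2 = 2 := sq_sqrt zero_le_two
  have hprod : (√2 * x + 1) * (√2 * x - 1) = 2 * x ^ 2 - 1 := by linear_combination x ^ 2 * hs
  have harctan :
      arctan (√2 * x + 1) + arctan (√2 * x - 1) = arctan (√2 * x / (1 - x ^ 2)) := by
    rw [arctan_add (by rw [hprod]; linarith), hprod]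
    have hx' : 1 - x ^ 2 ≠ 0 := by linarith
    congr 1
    rw [div_eq_div_iff (by contrapose! hx'; linarith) hx']
    ring
  rw [primitiveInvOneAddPowFour, harctan, log_div (one_add_sqrt_two_mul_add_sq_pos x).ne'
    (one_sub_sqrt_two_mul_add_sq_pos x).ne']

theorem integral_inv_one_add_mul_pow_four {x : ℝ} (hx : x ≠ 0) :
    ∫ u in -1..1, (1 + x ^ 4 * u ^ 4)⁻¹ = 2 / x * primitiveInvOneAddPowFour x := by
  simp_rw [← mul_pow]
  rw [integral_comp_mul_left (fun t => (1 + t ^ 4)⁻¹) hx, integral_inv_one_add_pow_four, mul_one,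
    mul_neg_one, primitiveInvOneAddPowFour_neg, smul_eq_mul]
  ring

theorem stmt_18 (x : ℝ) (hx : |x| < 1) (hx0 : x ≠ 0) :
    ∫ θ in (0:ℝ)..Real.pi, θ * Real.sin θ / (1 + x ^ 4 * Real.cos θ ^ 4)
      = Real.pi / (2 ^ ((5 : ℝ) / 2) * x) *
          Real.log ((1 + Real.sqrt 2 * x + x ^ 2) / (1 - Real.sqrt 2 * x + x ^ 2))
        + Real.pi / (2 ^ ((3 : ℝ) / 2) * x) *
          Real.arctan (Real.sqrt 2 * x / (1 - x ^ 2)) := by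
  have hx2 : x ^ 2 < 1 := by rwa [sq_lt_one_iff_abs_lt_one]
  have hsymm (θ : ℝ) :
      sin (π - θ) / (1 + x ^ 4 * cos (π - θ) ^ 4) = sin θ / (1 + x ^ 4 * cos θ ^ 4) := by
    rw [sin_pi_sub, cos_pi_sub, Even.neg_pow (by decide)]
  have h52 : (2 : ℝ) ^ ((5 : ℝ) / 2) = 4 * √2 := by
    rw [show (5 : ℝ) / 2 = 2 + 1 / 2 by norm_num, rpow_add two_pos, ← sqrt_eq_rpow]
    norm_num
  have h32 : (2 : ℝ) ^ ((3 : ℝ) / 2) = 2 * √2 := by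
    rw [show (3 : ℝ) / 2 = 1 + 1 / 2 by norm_num, rpow_add two_pos, ← sqrt_eq_rpow]
    norm_num
  calc _ = π / 2 * ∫ θ in 0..π, sin θ / (1 + x ^ 4 * cos θ ^ 4) := by
        simp_rw [mul_div_assoc]
        exact integral_id_mul_eq_half_mul_integral
          (Continuous.intervalIntegrable (by fun_prop (disch := intro θ; positivity)) _ _) hsymm
    _ = π / 2 * ∫ u in -1..1, (1 + x ^ 4 * u ^ 4)⁻¹ := by
        simp_rw [div_eq_mul_inv]
        rw [integral_sin_mul_comp_cos (f := fun u => (1 + x ^ 4 * u ^ 4)⁻¹)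
          (by fun_prop (disch := intro u; positivity))]
    _ = π / x * primitiveInvOneAddPowFour x := by
        rw [integral_inv_one_add_mul_pow_four hx0]
        ring
    _ = _ := by
        rw [primitiveInvOneAddPowFour_eq hx2, h52, h32]
        field_simp
        rw [sq_sqrt zero_le_two]
        ring
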